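/- Let W be the ladder pfaffian variety of Lemma on codimension (blocks X_k^{(1)} on rows/columns a_k,...,b_k−1 and X_k^{(2)} on rows/columns a_k+1,...,b_k, both with pfaffian size 2t_k, t_k maximal). Then the defining ideal I_W is contained both in I_{2t}(Y) (the ideal of V) and in I_{2t'}(Y') (the ideal of V'), i.e., both V and V' are closed subschemes of W. -/

import Mathlib

open Matrix MvPolynomial

noncomputable def pf {R : Type*} [CommRing R] : (m : ℕ) → Matrix (Fin m) (Fin m) R → R
  | 0, _ => 1
  | 1, _ => 0
  | (m+2), A => ∑ j : Fin (m+1), (-1:R)^(j:ℕ) * A 0 j.succ *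
      pf m (A.submatrix (fun i => Fin.succ (j.succAbove i)) (fun i => Fin.succ (j.succAbove i)))

noncomputable def pfS {R : Type*} [CommRing R] {n : ℕ} (A : Matrix (Fin n) (Fin n) R)
    (s : Finset (Fin n)) : R :=
  pf s.card (A.submatrix (s.orderEmbOfFin rfl) (s.orderEmbOfFin rfl))


/-- Membership in the ladder with upper corners `(a k, b k)` (a union of square blocks). -/
def inLad {n s : ℕ} (a b : Fin s → ℕ) (i j : Fin n) : Prop :=
  ∃ k, a k ≤ (i : ℕ) ∧ (i : ℕ) ≤ b k ∧ a k ≤ (j : ℕ) ∧ (j : ℕ) ≤ b k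

instance {n s : ℕ} (a b : Fin s → ℕ) (i j : Fin n) : Decidable (inLad a b i j) := by
  unfold inLad; infer_instance

/-- The indeterminates `x_{ij}`, `(i,j)` in the ladder, `i < j`. -/
abbrev LadVars (n : ℕ) {s : ℕ} (a b : Fin s → ℕ) :=
  {p : Fin n × Fin n // inLad a b p.1 p.2 ∧ p.1 < p.2}

/-- The generic skew-symmetric matrix supported on the ladder. -/
noncomputable def ladMat (K : Type*) [Field K] (n : ℕ) {s : ℕ} (a b : Fin s → ℕ) :
    Matrix (Fin n) (Fin n) (MvPolynomial (LadVars n a b) K) := fun i j =>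
  if h : inLad a b i j ∧ i < j then X ⟨(i, j), h⟩
  else if h' : inLad a b j i ∧ j < i then - X ⟨(j, i), h'⟩ else 0

/-- The ideal of `K[Y]` generated by the `2t`-pfaffians of the block on rows and
columns `lo,…,hi`. -/
noncomputable def ladPf (K : Type*) [Field K] (n : ℕ) {s : ℕ} (a b : Fin s → ℕ)
    (lo hi t : ℕ) : Ideal (MvPolynomial (LadVars n a b) K) :=
  Ideal.span {f | ∃ u : Finset (Fin n), u.card = 2 * t ∧
    (∀ i ∈ u, lo ≤ (i : ℕ) ∧ (i : ℕ) ≤ hi) ∧ f = pfS (ladMat K n a b) u}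

noncomputable def idealHeight {R : Type*} [CommRing R] (I : Ideal R) : ℕ∞ :=
  ⨅ p ∈ {p : PrimeSpectrum R | I ≤ p.asIdeal}, Order.height p


section PfHelpers
variable {R : Type*} [CommRing R] {n : ℕ}


lemma pfS_eq (A : Matrix (Fin n) (Fin n) R) {u : Finset (Fin n)} {m : ℕ} (h : u.card = m) :
    pfS A u = pf m (A.submatrix (u.orderEmbOfFin h) (u.orderEmbOfFin h)) := by
  subst h; rfl

lemma pf_submatrix_strictMono (A : Matrix (Fin n) (Fin n) R) {m : ℕ} {f : Fin m → Fin n}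
    (hf : StrictMono f) {v : Finset (Fin n)} (hv : v.card = m) (hmem : ∀ i, f i ∈ v) :
    pf m (A.submatrix f f) = pfS A v := by
  rw [pfS_eq A hv, Finset.orderEmbOfFin_unique hv hmem hf]

/-- number of elements of `u` below `x`. -/
def cnt (u : Finset (Fin n)) (x : Fin n) : ℕ := (u.filter (· < x)).card

lemma cnt_orderEmbOfFin {u : Finset (Fin n)} {m : ℕ} (h : u.card = m) (i : Fin m) :
    cnt u (u.orderEmbOfFin h i) = i := by
  have : u.filter (· < u.orderEmbOfFin h i)
      = (Finset.Iio i).image (u.orderEmbOfFin h) := by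
    ext y
    simp only [Finset.mem_filter, Finset.mem_image, Finset.mem_Iio]
    constructor
    · rintro ⟨hy, hlt⟩
      have : y ∈ Set.range (u.orderEmbOfFin h) := by
        rw [Finset.range_orderEmbOfFin]; exact hy
      obtain ⟨j, rfl⟩ := this
      exact ⟨j, (u.orderEmbOfFin h).strictMono.lt_iff_lt.mp hlt, rfl⟩
    · rintro ⟨j, hj, rfl⟩
      exact ⟨Finset.orderEmbOfFin_mem u h j, (u.orderEmbOfFin h).strictMono hj⟩
  rw [cnt, this, Finset.card_image_of_injective _ (u.orderEmbOfFin h).injective, Fin.card_Iio]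

lemma cnt_erase {u : Finset (Fin n)} {a : Fin n} (ha : a ∈ u) (x : Fin n) :
    cnt (u.erase a) x + (if a < x then 1 else 0) = cnt u x := by
  unfold cnt
  rw [Finset.filter_erase]
  by_cases hax : a < x
  · have hmem : a ∈ u.filter (fun y => y < x) := Finset.mem_filter.mpr ⟨ha, hax⟩
    rw [if_pos hax, Finset.card_erase_of_mem hmem]
    have : 0 < (u.filter (fun y => y < x)).card := Finset.card_pos.mpr ⟨a, hmem⟩
    omega
  · rw [if_neg hax, Finset.erase_eq_of_notMem (by simp [hax]), add_zero]

lemma neg_one_pow_mod (a : ℕ) : (-1:R)^a = (-1:R)^(a % 2) := by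
  conv_lhs => rw [← Nat.div_add_mod a 2]
  rw [pow_add, pow_mul, neg_one_sq, one_pow, one_mul]

lemma neg_one_pow_congr_mod2 {a b : ℕ} (h : a % 2 = b % 2) : (-1:R)^a = (-1:R)^b := by
  rw [neg_one_pow_mod a, neg_one_pow_mod b, h]

lemma sum_erase_comm {α M : Type*} [DecidableEq α] [AddCommGroup M] (w : Finset α)
    (F : α → α → M) :
    ∑ p ∈ w, ∑ q ∈ w.erase p, F p q = ∑ q ∈ w, ∑ p ∈ w.erase q, F p q := by
  have h1 : ∀ p ∈ w, ∑ q ∈ w.erase p, F p q = (∑ q ∈ w, F p q) - F p p := by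
    intro p hp
    rw [eq_sub_iff_add_eq, Finset.sum_erase_add _ _ hp]
  have h2 : ∀ q ∈ w, ∑ p ∈ w.erase q, F p q = (∑ p ∈ w, F p q) - F q q := by
    intro q hq
    rw [eq_sub_iff_add_eq, Finset.sum_erase_add _ _ hq]
  rw [Finset.sum_congr rfl h1, Finset.sum_congr rfl h2, Finset.sum_sub_distrib,
    Finset.sum_sub_distrib, Finset.sum_comm]

lemma pfS_expand_min (A : Matrix (Fin n) (Fin n) R) {m : ℕ} {u : Finset (Fin n)}
    (h : u.card = m + 2) {m₀ : Fin n} (h0 : m₀ ∈ u) (hmin : ∀ y ∈ u, m₀ ≤ y) :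
    pfS A u = ∑ x ∈ u.erase m₀,
      (-1:R)^(cnt u x + 1) * A m₀ x * pfS A ((u.erase m₀).erase x) := by
  set e := u.orderEmbOfFin h with he
  have hee : ∀ y ∈ u, ∃ i, e i = y := by
    intro y hy
    have : y ∈ Set.range e := by rw [he, Finset.range_orderEmbOfFin]; exact hy
    exact this
  have he0 : e 0 = m₀ := by
    obtain ⟨i, hi⟩ := hee m₀ h0
    exact le_antisymm (hi ▸ e.monotone (Fin.zero_le i))
      (hmin _ (Finset.orderEmbOfFin_mem u h 0))
  have hinj : Function.Injective e := e.injective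
  have hmemjs : ∀ j : Fin (m+1), e j.succ ∈ u.erase m₀ := by
    intro j
    refine Finset.mem_erase.mpr ⟨?_, by rw [he]; exact Finset.orderEmbOfFin_mem u h _⟩
    rw [← he0]
    exact fun hc => (Fin.succ_ne_zero j) (hinj hc)
  have himg : Finset.univ.image (fun j : Fin (m+1) => e j.succ) = u.erase m₀ := by
    ext y
    simp only [Finset.mem_image, Finset.mem_univ, true_and, Finset.mem_erase]
    constructor
    · rintro ⟨j, rfl⟩
      exact Finset.mem_erase.mp (hmemjs j)
    · rintro ⟨hne, hy⟩
      obtain ⟨i, rfl⟩ := hee y hy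
      have hi0 : i ≠ 0 := fun hc => hne (by rw [hc, he0])
      exact ⟨i.pred hi0, by rw [Fin.succ_pred]⟩
  rw [pfS_eq A h, pf, ← himg,
    Finset.sum_image (fun x _ y _ hxy => Fin.succ_injective _ (hinj hxy))]
  simp only [himg]
  refine Finset.sum_congr rfl fun j _ => ?_
  have hcnt : cnt u (e j.succ) = (j : ℕ) + 1 := by
    rw [he, cnt_orderEmbOfFin h]; simp [Fin.val_succ]
  have hcard : ((u.erase m₀).erase (e j.succ)).card = m := by
    rw [Finset.card_erase_of_mem (hmemjs j), Finset.card_erase_of_mem h0, h]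
    omega
  have hpf : pf m ((A.submatrix e e).submatrix
      (fun i => Fin.succ (j.succAbove i)) (fun i => Fin.succ (j.succAbove i)))
      = pfS A ((u.erase m₀).erase (e j.succ)) := by
    rw [Matrix.submatrix_submatrix]
    refine pf_submatrix_strictMono A ?_ hcard ?_
    · exact e.strictMono.comp (Fin.strictMono_succ.comp (Fin.strictMono_succAbove j))
    · intro i
      refine Finset.mem_erase.mpr ⟨?_, ?_⟩
      · exact fun hc => (Fin.succAbove_ne j i) (Fin.succ_injective _ (hinj hc))
      · refine Finset.mem_erase.mpr ⟨?_, by rw [he]; exact Finset.orderEmbOfFin_mem u h _⟩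
        rw [← he0]
        exact fun hc => (Fin.succ_ne_zero _) (hinj hc)
  rw [hpf, hcnt]
  have hsub : (A.submatrix e e) 0 j.succ = A m₀ (e j.succ) := by
    rw [Matrix.submatrix_apply, he0]
  rw [hsub]
  congr 2
  exact neg_one_pow_congr_mod2 (by omega)

lemma cnt_max {u : Finset (Fin n)} {M : Fin n} (hM : M ∈ u) (hMx : ∀ y ∈ u, y ≤ M) :
    cnt u M = u.card - 1 := by
  have : u.filter (· < M) = u.erase M := by
    ext y
    simp only [Finset.mem_filter, Finset.mem_erase]
    exact ⟨fun ⟨hy, hlt⟩ => ⟨ne_of_lt hlt, hy⟩,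
      fun ⟨hne, hy⟩ => ⟨hy, lt_of_le_of_ne (hMx y hy) hne⟩⟩
  rw [cnt, this, Finset.card_erase_of_mem hM]

lemma cnt_min {u : Finset (Fin n)} {m₀ : Fin n} (hmin : ∀ y ∈ u, m₀ ≤ y) :
    cnt u m₀ = 0 := by
  rw [cnt, Finset.card_eq_zero, Finset.filter_eq_empty_iff]
  exact fun {y} hy => not_lt.mpr (hmin y hy)


lemma pfS_expand_max (A : Matrix (Fin n) (Fin n) R) :
    ∀ (m : ℕ) (u : Finset (Fin n)), u.card = m + 2 → ∀ M : Fin n, M ∈ u →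
      (∀ y ∈ u, y ≤ M) →
    pfS A u = ∑ x ∈ u.erase M,
      (-1:R)^(m + cnt u x) * A x M * pfS A ((u.erase M).erase x) := by
  intro m
  induction m using Nat.twoStepInduction with
  | zero =>
    intro u h M hM hMx
    have hne : u.Nonempty := Finset.card_pos.mp (by omega)
    have h0 : u.min' hne ∈ u := u.min'_mem hne
    set m₀ := u.min' hne with hm₀def
    have hmin : ∀ y ∈ u, m₀ ≤ y := fun y hy => u.min'_le y hy
    have hm0M : m₀ ≠ M := by
      obtain ⟨x, hx, y, hy, hxy⟩ := Finset.one_lt_card.mp (show 1 < u.card by omega)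
      intro hc
      have hxM : x = M := le_antisymm (hMx x hx) (hc ▸ hmin x hx)
      have hyM : y = M := le_antisymm (hMx y hy) (hc ▸ hmin y hy)
      exact hxy (hxM.trans hyM.symm)
    have hsub : ∀ y ∈ u, y = m₀ ∨ y = M := by
      intro y hy
      by_contra hc
      push_neg at hc
      have hss : ({m₀, y, M} : Finset (Fin n)) ⊆ u := by
        intro z hz
        simp only [Finset.mem_insert, Finset.mem_singleton] at hz
        rcases hz with rfl | rfl | rfl <;> assumption
      have hc3 : ({m₀, y, M} : Finset (Fin n)).card = 3 := by
        rw [Finset.card_insert_of_notMem (by simp [Ne.symm hc.1, hm0M]),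
          Finset.card_insert_of_notMem (by simp [hc.2])]
        rfl
      have := Finset.card_le_card hss
      omega
    have h1 : u.erase m₀ = {M} := by
      apply Finset.eq_singleton_iff_unique_mem.mpr
      refine ⟨Finset.mem_erase.mpr ⟨Ne.symm hm0M, hM⟩, fun y hy => ?_⟩
      obtain ⟨hyne, hyu⟩ := Finset.mem_erase.mp hy
      rcases hsub y hyu with rfl | rfl
      · exact absurd rfl hyne
      · rfl
    have h2 : u.erase M = {m₀} := by
      apply Finset.eq_singleton_iff_unique_mem.mpr
      refine ⟨Finset.mem_erase.mpr ⟨hm0M, h0⟩, fun y hy => ?_⟩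
      obtain ⟨hyne, hyu⟩ := Finset.mem_erase.mp hy
      rcases hsub y hyu with rfl | rfl
      · rfl
      · exact absurd rfl hyne
    rw [pfS_expand_min A h h0 hmin, h1, h2, Finset.sum_singleton, Finset.sum_singleton,
      cnt_max hM hMx, cnt_min hmin, h, Finset.erase_singleton, Finset.erase_singleton]
    norm_num
  | one =>
    intro u h M hM hMx
    have hL : pfS A u = 0 := by
      rw [pfS_eq A h]
      simp only [pf, mul_zero, Finset.sum_const_zero]
    rw [hL]
    symm
    apply Finset.sum_eq_zero
    intro x hx
    have hcard : ((u.erase M).erase x).card = 1 := by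
      rw [Finset.card_erase_of_mem hx, Finset.card_erase_of_mem hM, h]
    rw [pfS_eq A hcard]
    simp only [pf, mul_zero]
  | more m IH _ =>
    intro u h M hM hMx
    have hne : u.Nonempty := Finset.card_pos.mp (by omega)
    have h0 : u.min' hne ∈ u := u.min'_mem hne
    set m₀ := u.min' hne with hm₀def
    have hmin : ∀ y ∈ u, m₀ ≤ y := fun y hy => u.min'_le y hy
    have hm0M : m₀ ≠ M := by
      obtain ⟨x, hx, y, hy, hxy⟩ := Finset.one_lt_card.mp (show 1 < u.card by omega)
      intro hc
      have hxM : x = M := le_antisymm (hMx x hx) (hc ▸ hmin x hx)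
      have hyM : y = M := le_antisymm (hMx y hy) (hc ▸ hmin y hy)
      exact hxy (hxM.trans hyM.symm)
    have hMe : M ∈ u.erase m₀ := Finset.mem_erase.mpr ⟨Ne.symm hm0M, hM⟩
    have hm₀e : m₀ ∈ u.erase M := Finset.mem_erase.mpr ⟨hm0M, h0⟩
    set w : Finset (Fin n) := (u.erase m₀).erase M with hw
    have hwcomm : (u.erase M).erase m₀ = w := Finset.erase_right_comm
    have hwcard : w.card = m + 2 := by
      rw [hw, Finset.card_erase_of_mem hMe, Finset.card_erase_of_mem h0, h]
      omega
    have hwmem : ∀ p ∈ w, p ∈ u ∧ p ≠ m₀ ∧ p ≠ M := by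
      intro p hp
      obtain ⟨hpM, hp'⟩ := Finset.mem_erase.mp hp
      obtain ⟨hpm, hpu⟩ := Finset.mem_erase.mp hp'
      exact ⟨hpu, hpm, hpM⟩
    -- expand LHS along the minimum
    rw [pfS_expand_min A h h0 hmin, ← Finset.add_sum_erase _ _ hMe]
    -- expand RHS head term
    rw [← Finset.add_sum_erase _ _ hm₀e, hwcomm]
    have hhead : (-1:R)^(cnt u M + 1) * A m₀ M * pfS A ((u.erase m₀).erase M)
        = (-1:R)^(m + 2 + cnt u m₀) * A m₀ M * pfS A w := by
      rw [cnt_max hM hMx, cnt_min hmin, h]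
      congr 1
      congr 1
      exact neg_one_pow_congr_mod2 (by omega)
    rw [hhead]
    congr 1
    -- the two double sums
    have hL : ∀ p ∈ w, (-1:R)^(cnt u p + 1) * A m₀ p * pfS A ((u.erase m₀).erase p)
        = ∑ q ∈ w.erase p, (-1:R)^(m + cnt u p + cnt u q) * (if p < q then (-1:R) else 1) *
            (A m₀ p * (A q M * pfS A ((w.erase p).erase q))) := by
      intro p hp
      obtain ⟨hpu, hpm, hpM⟩ := hwmem p hp
      have hpe : p ∈ u.erase m₀ := Finset.mem_erase.mpr ⟨hpm, hpu⟩
      have hMp : M ∈ (u.erase m₀).erase p :=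
        Finset.mem_erase.mpr ⟨Ne.symm hpM, hMe⟩
      have hcardp : ((u.erase m₀).erase p).card = m + 2 := by
        rw [Finset.card_erase_of_mem hpe, Finset.card_erase_of_mem h0, h]
        omega
      have hswap : ((u.erase m₀).erase p).erase M = w.erase p := by
        rw [hw, Finset.erase_right_comm]
      rw [IH ((u.erase m₀).erase p) hcardp M hMp
        (fun y hy => hMx y (Finset.mem_of_mem_erase (Finset.mem_of_mem_erase hy))),
        hswap, Finset.mul_sum]
      refine Finset.sum_congr rfl fun q hq => ?_
      obtain ⟨hqp, hqw⟩ := Finset.mem_erase.mp hq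
      obtain ⟨hqu, hqm, hqM⟩ := hwmem q hqw
      have hqe : q ∈ u.erase m₀ := Finset.mem_erase.mpr ⟨hqm, hqu⟩
      have hc1 : cnt ((u.erase m₀).erase p) q + (if p < q then 1 else 0)
          = cnt (u.erase m₀) q := cnt_erase hpe q
      have hc2 : cnt (u.erase m₀) q + 1 = cnt u q := by
        have := cnt_erase h0 q
        rwa [if_pos (lt_of_le_of_ne (hmin q hqu) (Ne.symm hqm))] at this
      rcases lt_or_gt_of_ne hqp.symm with hpq | hpq
      · rw [if_pos hpq]
        rw [if_pos hpq] at hc1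
        have hexp : (-1:R)^(cnt u p + 1) * (-1:R)^(m + cnt ((u.erase m₀).erase p) q)
            = (-1:R)^(m + cnt u p + cnt u q) * (-1:R) := by
          rw [← pow_add, ← pow_succ]
          exact neg_one_pow_congr_mod2 (by omega)
        linear_combination (A m₀ p * (A q M * pfS A ((w.erase p).erase q))) * hexp
      · rw [if_neg (not_lt.mpr hpq.le)]
        rw [if_neg (not_lt.mpr hpq.le)] at hc1
        have hexp : (-1:R)^(cnt u p + 1) * (-1:R)^(m + cnt ((u.erase m₀).erase p) q)
            = (-1:R)^(m + cnt u p + cnt u q) * 1 := by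
          rw [← pow_add, mul_one]
          exact neg_one_pow_congr_mod2 (by omega)
        linear_combination (A m₀ p * (A q M * pfS A ((w.erase p).erase q))) * hexp
    have hR : ∀ x ∈ w, (-1:R)^(m + 2 + cnt u x) * A x M * pfS A ((u.erase M).erase x)
        = ∑ y ∈ w.erase x, (-1:R)^(m + cnt u y + cnt u x) * (if y < x then (-1:R) else 1) *
            (A m₀ y * (A x M * pfS A ((w.erase y).erase x))) := by
      intro x hx
      obtain ⟨hxu, hxm, hxM⟩ := hwmem x hx
      have hxe : x ∈ u.erase M := Finset.mem_erase.mpr ⟨hxM, hxu⟩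
      have hm₀x : m₀ ∈ (u.erase M).erase x := Finset.mem_erase.mpr ⟨Ne.symm hxm, hm₀e⟩
      have hcardx : ((u.erase M).erase x).card = m + 2 := by
        rw [Finset.card_erase_of_mem hxe, Finset.card_erase_of_mem hM, h]
        omega
      have hswap : ((u.erase M).erase x).erase m₀ = w.erase x := by
        rw [Finset.erase_right_comm, hwcomm]
      rw [pfS_expand_min A hcardx hm₀x
        (fun y hy => hmin y (Finset.mem_of_mem_erase (Finset.mem_of_mem_erase hy))),
        hswap, Finset.mul_sum]
      refine Finset.sum_congr rfl fun y hy => ?_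
      obtain ⟨hyx, hyw⟩ := Finset.mem_erase.mp hy
      obtain ⟨hyu, hym, hyM⟩ := hwmem y hyw
      have hye : y ∈ u.erase M := Finset.mem_erase.mpr ⟨hyM, hyu⟩
      have hc1 : cnt ((u.erase M).erase x) y + (if x < y then 1 else 0)
          = cnt (u.erase M) y := cnt_erase hxe y
      have hc2 : cnt (u.erase M) y + 0 = cnt u y := by
        have := cnt_erase hM y
        rwa [if_neg (not_lt.mpr (hMx y hyu))] at this
      have hsw2 : ((w.erase x)).erase y = (w.erase y).erase x := Finset.erase_right_comm
      rw [hsw2]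
      rcases lt_or_gt_of_ne hyx with hxy | hxy
      · rw [if_pos hxy]
        rw [if_neg (not_lt.mpr hxy.le)] at hc1
        have hexp : (-1:R)^(m + 2 + cnt u x) * (-1:R)^(cnt ((u.erase M).erase x) y + 1)
            = (-1:R)^(m + cnt u y + cnt u x) * (-1:R) := by
          rw [← pow_add, ← pow_succ]
          exact neg_one_pow_congr_mod2 (by omega)
        linear_combination (A m₀ y * (A x M * pfS A ((w.erase y).erase x))) * hexp
      · rw [if_neg (not_lt.mpr hxy.le)]
        rw [if_pos hxy] at hc1
        have hexp : (-1:R)^(m + 2 + cnt u x) * (-1:R)^(cnt ((u.erase M).erase x) y + 1)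
            = (-1:R)^(m + cnt u y + cnt u x) * 1 := by
          rw [← pow_add, mul_one]
          exact neg_one_pow_congr_mod2 (by omega)
        linear_combination (A m₀ y * (A x M * pfS A ((w.erase y).erase x))) * hexp
    rw [Finset.sum_congr rfl hL, Finset.sum_congr rfl hR]
    exact sum_erase_comm w _

end PfHelpers

section IdealHelpers
variable (K : Type*) [Field K] (n : ℕ) {s : ℕ} (a b : Fin s → ℕ)

variable (K : Type*) [Field K] (n : ℕ) {s : ℕ} (a b : Fin s → ℕ)

lemma ladPf_mono {lo hi lo' hi' t : ℕ} (hlo : lo' ≤ lo) (hhi : hi ≤ hi') :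
    ladPf K n a b lo hi t ≤ ladPf K n a b lo' hi' t := by
  apply Ideal.span_le.mpr
  rintro f ⟨u, hc, hr, rfl⟩
  exact Ideal.subset_span ⟨u, hc,
    fun i hi => ⟨le_trans hlo (hr i hi).1, le_trans (hr i hi).2 hhi⟩, rfl⟩

lemma ladPf_drop_min {lo hi lo' hi' t : ℕ} (hlo : lo' ≤ lo + 1) (hhi : hi ≤ hi')
    (h2 : 2 ≤ t) :
    ladPf K n a b lo hi t ≤ ladPf K n a b lo' hi' (t - 1) := by
  apply Ideal.span_le.mpr
  rintro f ⟨u, hc, hr, rfl⟩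
  have hcard : u.card = 2 * (t - 1) + 2 := by omega
  have hne : u.Nonempty := Finset.card_pos.mp (by omega)
  have h0 : u.min' hne ∈ u := u.min'_mem hne
  rw [SetLike.mem_coe,
    pfS_expand_min (ladMat K n a b) hcard h0 (fun y hy => u.min'_le y hy)]
  apply Ideal.sum_mem
  intro x hx
  apply Ideal.mul_mem_left
  apply Ideal.subset_span
  refine ⟨(u.erase (u.min' hne)).erase x, ?_, ?_, rfl⟩
  · rw [Finset.card_erase_of_mem hx, Finset.card_erase_of_mem h0]
    omega
  · intro i hi
    obtain ⟨hix, hi'⟩ := Finset.mem_erase.mp hi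
    obtain ⟨him, hiu⟩ := Finset.mem_erase.mp hi'
    have h1 := hr i hiu
    have h2 := hr _ h0
    have h3 : u.min' hne < i := lt_of_le_of_ne (u.min'_le i hiu) (Ne.symm him)
    have h4 : (u.min' hne : ℕ) < (i : ℕ) := h3
    omega

lemma ladPf_drop_max {lo hi lo' hi' t : ℕ} (hlo : lo' ≤ lo) (hhi : hi ≤ hi' + 1)
    (h2 : 2 ≤ t) :
    ladPf K n a b lo hi t ≤ ladPf K n a b lo' hi' (t - 1) := by
  apply Ideal.span_le.mpr
  rintro f ⟨u, hc, hr, rfl⟩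
  have hcard : u.card = 2 * (t - 1) + 2 := by omega
  have hne : u.Nonempty := Finset.card_pos.mp (by omega)
  have hMm : u.max' hne ∈ u := u.max'_mem hne
  rw [SetLike.mem_coe,
    pfS_expand_max (ladMat K n a b) (2 * (t - 1)) u hcard (u.max' hne) hMm
      (fun y hy => Finset.le_max' u y hy)]
  apply Ideal.sum_mem
  intro x hx
  apply Ideal.mul_mem_left
  apply Ideal.subset_span
  refine ⟨(u.erase (u.max' hne)).erase x, ?_, ?_, rfl⟩
  · rw [Finset.card_erase_of_mem hx, Finset.card_erase_of_mem hMm]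
    omega
  · intro i hi
    obtain ⟨hix, hi'⟩ := Finset.mem_erase.mp hi
    obtain ⟨hiM, hiu⟩ := Finset.mem_erase.mp hi'
    have h1 := hr i hiu
    have h2 := hr _ hMm
    have h3 : i < u.max' hne := lt_of_le_of_ne (Finset.le_max' u i hiu) hiM
    have h4 : (i : ℕ) < (u.max' hne : ℕ) := h3
    omega


end IdealHelpers

/-- the ideal `I_W` (generated by the `I_{2t_j}(X_j)` for `j ≠ k` together
with the `2t_k`-pfaffians of the two blocks `X_k⁽¹⁾` on rows/columns `a_k,…,b_k−1` and
`X_k⁽²⁾` on rows/columns `a_k+1,…,b_k`) is contained both in `I_{2t}(Y)` and in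
`I_{2t'}(Y')`; i.e. both `V` and `V'` are closed subschemes of `W`. -/
theorem IW_le_IV_and_IV' (K : Type*) [Field K]
    (n s : ℕ) (a b t : Fin s → ℕ)
    (hab : ∀ j, a j < b j) (hbn : ∀ j, b j < n)
    (hmona : Monotone a) (hmonb : Monotone b)
    (ht : ∀ j, 1 ≤ t j) (hsize : ∀ j, a j + 2 * t j ≤ b j + 1)
    (hconsa : ∀ i : ℕ, (h : i + 1 < s) →
      a ⟨i, by omega⟩ + t ⟨i, by omega⟩ < a ⟨i + 1, h⟩ + t ⟨i + 1, h⟩)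
    (hconsb : ∀ i : ℕ, (h : i + 1 < s) →
      b ⟨i, by omega⟩ + t ⟨i + 1, h⟩ < b ⟨i + 1, h⟩ + t ⟨i, by omega⟩)
    (k : Fin s) (hmax : ∀ j, t j ≤ t k) (htk : 2 ≤ t k) :
    letI IW : Ideal (MvPolynomial (LadVars n a b) K) :=
      (∑ j ∈ Finset.univ.erase k, ladPf K n a b (a j) (b j) (t j)) +
        ladPf K n a b (a k) (b k - 1) (t k) + ladPf K n a b (a k + 1) (b k) (t k)
    IW ≤ (∑ j : Fin s, ladPf K n a b (a j) (b j) (t j)) ∧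
    IW ≤ (∑ j ∈ Finset.univ.erase k, ladPf K n a b (a j) (b j) (t j)) +
        ladPf K n a b (a k + 1) (b k - 1) (t k - 1) := by
  have hdec : (∑ j : Fin s, ladPf K n a b (a j) (b j) (t j))
      = ladPf K n a b (a k) (b k) (t k)
        + ∑ j ∈ Finset.univ.erase k, ladPf K n a b (a j) (b j) (t j) :=
    (Finset.add_sum_erase _ _ (Finset.mem_univ k)).symm
  constructor
  · rw [Submodule.add_eq_sup, Submodule.add_eq_sup]
    have hSk : (∑ j ∈ Finset.univ.erase k, ladPf K n a b (a j) (b j) (t j))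
        ≤ ∑ j : Fin s, ladPf K n a b (a j) (b j) (t j) := by
      rw [hdec, Submodule.add_eq_sup]; exact le_sup_right
    have hfk : ladPf K n a b (a k) (b k) (t k)
        ≤ ∑ j : Fin s, ladPf K n a b (a j) (b j) (t j) := by
      rw [hdec, Submodule.add_eq_sup]; exact le_sup_left
    exact sup_le (sup_le hSk
        (le_trans (ladPf_mono K n a b le_rfl (by omega)) hfk))
      (le_trans (ladPf_mono K n a b (by omega) le_rfl) hfk)
  · rw [Submodule.add_eq_sup, Submodule.add_eq_sup, Submodule.add_eq_sup]
    refine sup_le (sup_le le_sup_left ?_) ?_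
    · exact le_trans (ladPf_drop_min K n a b le_rfl le_rfl htk) le_sup_right
    · exact le_trans (ladPf_drop_max K n a b le_rfl (by have := hab k; omega) htk)
        le_sup_right
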